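/- For (b,g) ∈ {(1,1), (-1,1), (1,xy), (-1,xy)}, the Nichols algebra B(M⟨b,g⟩) is isomorphic to the polynomial algebra K[p] in one variable, and in particular infinite-dimensional; for (b,g) ∈ {(i,x), (-i,x), (i,y), (-i,y)}, the Nichols algebra B(M⟨b,g⟩) is isomorphic to K[p]/(p^2), and in particular has dimension 2 over K. -/

import Mathlib

open TensorProduct Coalgebra

noncomputable section

/-- The Kac–Paljutkin algebra structure: a Hopf algebra `H` over `K` together with
generators `x, y, z` satisfying the defining relations of `H₈`, such that
`1, x, y, xy, z, xz, yz, xyz` is a linear basis, with the prescribed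
comultiplication, counit and antipode values. -/
structure KPAlg (K : Type*) (H : Type*) [Field K] [Ring H] [HopfAlgebra K H] where
  x : H
  y : H
  z : H
  basis_indep : LinearIndependent K
    ![(1 : H), x, y, x*y, z, x*z, y*z, x*y*z]
  basis_span : Submodule.span K
    (Set.range ![(1 : H), x, y, x*y, z, x*z, y*z, x*y*z]) = ⊤
  x_sq : x^2 = 1
  y_sq : y^2 = 1
  xy_comm : x*y = y*x
  zx : z*x = y*z
  zy : z*y = x*z
  z_sq : z^2 = (2:K)⁻¹ • (1 + x + y - x*y)
  comul_x : comul (R := K) x = x ⊗ₜ[K] x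
  comul_y : comul (R := K) y = y ⊗ₜ[K] y
  comul_z : comul (R := K) z =
    (2:K)⁻¹ • (z ⊗ₜ[K] z + z ⊗ₜ[K] (x*z) + (y*z) ⊗ₜ[K] z - (y*z) ⊗ₜ[K] (x*z))
  counit_x : counit (R := K) x = 1
  counit_y : counit (R := K) y = 1
  counit_z : counit (R := K) z = 1
  antipode_x : HopfAlgebra.antipode (R := K) x = x
  antipode_y : HopfAlgebra.antipode (R := K) y = y
  antipode_z : HopfAlgebra.antipode (R := K) z = z

end


open TensorProduct Coalgebra

noncomputable section

variable (K : Type*) (H : Type*) [Field K] [Ring H] [HopfAlgebra K H]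

/-- The data of a candidate Yetter–Drinfeld module over `H`: a `K`-bilinear
action of `H` and a `K`-linear coaction. -/
structure PreYD (M : Type*) [AddCommGroup M] [Module K M] where
  act : H →ₗ[K] M →ₗ[K] M
  coact : M →ₗ[K] H ⊗[K] M

namespace PreYD

variable {K H}
variable {M : Type*} [AddCommGroup M] [Module K M]
variable {N : Type*} [AddCommGroup N] [Module K N]

/-- The Yetter–Drinfeld compatibility map `h ⊗ m ↦ h₍₁₎ m₍₋₁₎ S(h₍₃₎) ⊗ h₍₂₎ · m₍₀₎`. -/
def ydRHS (P : PreYD K H M) : H ⊗[K] M →ₗ[K] H ⊗[K] M :=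
  let Δ : H →ₗ[K] H ⊗[K] H := comul (R := K)
  let S : H →ₗ[K] H := HopfAlgebra.antipode (R := K)
  let Δ₂ : H →ₗ[K] H ⊗[K] (H ⊗[K] H) :=
    (TensorProduct.map LinearMap.id Δ) ∘ₗ Δ
  -- h₁ ⊗ (h₂ ⊗ h₃) ↦ (h₁ ⊗ h₃) ⊗ h₂
  let e1 : H ⊗[K] (H ⊗[K] H) →ₗ[K] (H ⊗[K] H) ⊗[K] H :=
    (TensorProduct.assoc K H H H).symm.toLinearMap ∘ₗ
      (TensorProduct.map LinearMap.id (TensorProduct.comm K H H).toLinearMap)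
  -- (h₁ ⊗ h₃) ⊗ g ↦ h₁ * g * S h₃
  let mulFinal : (H ⊗[K] H) ⊗[K] H →ₗ[K] H :=
    (LinearMap.mul' K H) ∘ₗ
    (TensorProduct.map LinearMap.id (LinearMap.mul' K H)) ∘ₗ
    (TensorProduct.map LinearMap.id (TensorProduct.comm K H H).toLinearMap) ∘ₗ
    (TensorProduct.assoc K H H H).toLinearMap ∘ₗ
    (TensorProduct.map (TensorProduct.map LinearMap.id S) LinearMap.id)
  (TensorProduct.map mulFinal (TensorProduct.lift P.act)) ∘ₗ
    (TensorProduct.tensorTensorTensorComm K (H ⊗[K] H) H H M).toLinearMap ∘ₗ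
    (TensorProduct.map e1 LinearMap.id) ∘ₗ
    (TensorProduct.map Δ₂ P.coact)

/-- The axioms making a `PreYD` a genuine Yetter–Drinfeld module: `M` is a left
`H`-module, a left `H`-comodule, and the Yetter–Drinfeld compatibility holds. -/
def IsYD (P : PreYD K H M) : Prop :=
  (∀ m : M, P.act 1 m = m) ∧
  (∀ g h : H, ∀ m : M, P.act (g * h) m = P.act g (P.act h m)) ∧
  (∀ m : M, (TensorProduct.assoc K H H M)
      ((TensorProduct.map (comul (R := K)) LinearMap.id) (P.coact m)) =
    (TensorProduct.map LinearMap.id P.coact) (P.coact m)) ∧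
  (∀ m : M, (TensorProduct.lid K M)
      ((TensorProduct.map (counit (R := K)) LinearMap.id) (P.coact m)) = m) ∧
  (∀ (h : H) (m : M), P.coact (P.act h m) = P.ydRHS (h ⊗ₜ[K] m))

/-- Isomorphism of Yetter–Drinfeld module data: a linear equivalence commuting
with the actions and the coactions. -/
def Equiv (P : PreYD K H M) (Q : PreYD K H N) : Prop :=
  ∃ f : M ≃ₗ[K] N,
    (∀ (h : H) (m : M), f (P.act h m) = Q.act h (f m)) ∧
    (∀ m : M, Q.coact (f m) =
      (TensorProduct.map LinearMap.id (f : M →ₗ[K] N)) (P.coact m))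

/-- A `K`-subspace which is both an `H`-submodule and an `H`-subcomodule. -/
def IsSubYD (P : PreYD K H M) (S : Submodule K M) : Prop :=
  (∀ h : H, ∀ m ∈ S, P.act h m ∈ S) ∧
  (∀ m ∈ S, P.coact m ∈
    LinearMap.range (TensorProduct.map (LinearMap.id : H →ₗ[K] H) S.subtype))

/-- A Yetter–Drinfeld module is simple if it is nonzero and has no nonzero
proper Yetter–Drinfeld submodule. -/
def IsSimple (P : PreYD K H M) : Prop :=
  (∃ m : M, m ≠ 0) ∧
  ∀ S : Submodule K M, P.IsSubYD S → S = ⊥ ∨ S = ⊤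

/-- The braiding `c(v ⊗ w) = v₍₋₁₎ · w ⊗ v₍₀₎` of a Yetter–Drinfeld module. -/
def braiding (P : PreYD K H M) : M ⊗[K] M →ₗ[K] M ⊗[K] M :=
  (TensorProduct.map (TensorProduct.lift P.act) LinearMap.id) ∘ₗ
  (TensorProduct.assoc K H M M).symm.toLinearMap ∘ₗ
  (TensorProduct.map LinearMap.id (TensorProduct.comm K M M).toLinearMap) ∘ₗ
  (TensorProduct.assoc K H M M).toLinearMap ∘ₗ
  (TensorProduct.map P.coact LinearMap.id)

end PreYD

end

noncomputable section

namespace KPAlg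

variable {K : Type*} {H : Type*} [Field K] [Ring H] [HopfAlgebra K H]

/-- `f₀₀ = (1/4)(1+x)(1+y)`. -/
def f00 (P : KPAlg K H) : H := (4:K)⁻¹ • ((1 + P.x) * (1 + P.y))
/-- `f₁₀ = (1/4)(1-x)(1+y)`. -/
def f10 (P : KPAlg K H) : H := (4:K)⁻¹ • ((1 - P.x) * (1 + P.y))
/-- `f₀₁ = (1/4)(1+x)(1-y)`. -/
def f01 (P : KPAlg K H) : H := (4:K)⁻¹ • ((1 + P.x) * (1 - P.y))
/-- `f₁₁ = (1/4)(1-x)(1-y)`. -/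
def f11 (P : KPAlg K H) : H := (4:K)⁻¹ • ((1 - P.x) * (1 - P.y))

/-- `w = (f₀₀ + √i f₁₀ + (1/√i) f₀₁ + i f₁₁) z`. -/
def wEl (P : KPAlg K H) (i sqi : K) : H :=
  (P.f00 + sqi • P.f10 + sqi⁻¹ • P.f01 + i • P.f11) * P.z

section Chars

variable (P : KPAlg K H) (i : K)

/-- The one-dimensional Yetter–Drinfeld module data `M⟨b,g⟩`:
`x·v = b²v`, `y·v = b²v`, `z·v = bv`, `ρ(v) = g ⊗ v`. -/
def IsM1 (b : K) (g : H) (Q : PreYD K H K) : Prop :=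
  (∀ v : K, Q.act P.x v = b^2 * v) ∧
  (∀ v : K, Q.act P.y v = b^2 * v) ∧
  (∀ v : K, Q.act P.z v = b * v) ∧
  (∀ v : K, Q.coact v = g ⊗ₜ[K] v)

/-- Basis vector `(1,0)` of `K × K`. -/
def E1 : K × K := (1, 0)
/-- Basis vector `(0,1)` of `K × K`. -/
def E2 : K × K := (0, 1)

/-- The two-dimensional Yetter–Drinfeld module data `M⟨(1,xy)⟩`. -/
def IsM1xy (Q : PreYD K H (K × K)) : Prop :=
  Q.coact E1 = (1 : H) ⊗ₜ[K] E1 ∧ Q.coact E2 = (P.x * P.y) ⊗ₜ[K] E2 ∧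
  Q.act P.x E1 = -E1 ∧ Q.act P.x E2 = -E2 ∧
  Q.act P.y E1 = -E1 ∧ Q.act P.y E2 = -E2 ∧
  Q.act P.z E1 = i • E2 ∧ Q.act P.z E2 = i • E1

/-- The two-dimensional Yetter–Drinfeld module data `M⟨(x,y)⟩`. -/
def IsMxy (Q : PreYD K H (K × K)) : Prop :=
  Q.coact E1 = P.x ⊗ₜ[K] E1 ∧ Q.coact E2 = P.y ⊗ₜ[K] E2 ∧
  Q.act P.x E1 = E1 ∧ Q.act P.x E2 = E2 ∧
  Q.act P.y E1 = E1 ∧ Q.act P.y E2 = E2 ∧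
  Q.act P.z E1 = E2 ∧ Q.act P.z E2 = E1

/-- The two-dimensional Yetter–Drinfeld module data `M⟨(g₁,g₂)⟩`. -/
def IsMg (g₁ g₂ : H) (Q : PreYD K H (K × K)) : Prop :=
  Q.coact E1 = g₁ ⊗ₜ[K] E1 ∧ Q.coact E2 = g₂ ⊗ₜ[K] E2 ∧
  Q.act P.x E1 = E1 ∧ Q.act P.y E1 = -E1 ∧ Q.act P.z E1 = E2 ∧
  Q.act P.x E2 = -E2 ∧ Q.act P.y E2 = E2 ∧ Q.act P.z E2 = E1

/-- The two-dimensional Yetter–Drinfeld module data `W^{b₁,b₂}` in the basis `w₁, w₂`. -/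
def IsW (b₁ b₂ : K) (Q : PreYD K H (K × K)) : Prop :=
  Q.act P.x E1 = (i * b₁) • E2 ∧ Q.act P.x E2 = (-(i * b₁)) • E1 ∧
  Q.act P.y E1 = (i * b₁) • E2 ∧ Q.act P.y E2 = (-(i * b₁)) • E1 ∧
  Q.act P.z E1 = ((1 - i * b₁) * b₂ * (2:K)⁻¹) • (E1 - E2) ∧
  Q.act P.z E2 = ((1 - i * b₁) * b₂ * (2:K)⁻¹) • (E1 + E2) ∧
  Q.coact E1 = ((2:K)⁻¹ • ((1 + P.y) * P.z)) ⊗ₜ[K] E1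
      + ((2:K)⁻¹ • ((1 - P.y) * P.z)) ⊗ₜ[K] E2 ∧
  Q.coact E2 = ((2:K)⁻¹ • (P.x * (1 + P.y) * P.z)) ⊗ₜ[K] E2
      + ((2:K)⁻¹ • (P.x * (1 - P.y) * P.z)) ⊗ₜ[K] E1

/-- The two-dimensional Yetter–Drinfeld module data `W^{b₁,b₂}` in the basis `p₁, p₂`. -/
def IsWp (b₁ b₂ : K) (Q : PreYD K H (K × K)) : Prop :=
  Q.act P.x E1 = E1 ∧ Q.act P.y E1 = E1 ∧ Q.act P.z E1 = b₂ • E1 ∧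
  Q.act P.x E2 = -E2 ∧ Q.act P.y E2 = -E2 ∧ Q.act P.z E2 = (-(i * b₁ * b₂)) • E2 ∧
  Q.coact E1 = ((P.f00 - (i * b₁) • P.f11) * P.z) ⊗ₜ[K] E1
      + ((P.f10 + (i * b₁) • P.f01) * P.z) ⊗ₜ[K] E2 ∧
  Q.coact E2 = ((P.f00 + (i * b₁) • P.f11) * P.z) ⊗ₜ[K] E2
      + ((P.f10 - (i * b₁) • P.f01) * P.z) ⊗ₜ[K] E1

/-- The two-dimensional Yetter–Drinfeld module data `W₁ᵃ`. -/
def IsW1a (sqi a : K) (Q : PreYD K H (K × K)) : Prop :=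
  Q.act P.x E1 = -E1 ∧ Q.act P.y E1 = E1 ∧
  Q.act P.z E1 = ((2:K)⁻¹ * (1 - i) * (a + 1)) • E2 ∧
  Q.act P.x E2 = E2 ∧ Q.act P.y E2 = -E2 ∧
  Q.act P.z E2 = ((2:K)⁻¹ * (1 + i) * (a + 1)) • E1 ∧
  Q.coact E1 = ((2:K)⁻¹ • ((P.x + P.y) * P.wEl i sqi)) ⊗ₜ[K] E1
      + (((2:K)⁻¹ * sqi) • ((P.x - P.y) * P.wEl i sqi)) ⊗ₜ[K] E2 ∧
  Q.coact E2 = ((2:K)⁻¹ • ((1 + P.x * P.y) * P.wEl i sqi)) ⊗ₜ[K] E2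
      + (((2:K)⁻¹ * sqi) • ((1 - P.x * P.y) * P.wEl i sqi)) ⊗ₜ[K] E1

/-- The two-dimensional Yetter–Drinfeld module data `W₂ᵃ`. -/
def IsW2a (sqi a : K) (Q : PreYD K H (K × K)) : Prop :=
  Q.act P.x E1 = E1 ∧ Q.act P.y E1 = -E1 ∧
  Q.act P.z E1 = ((2:K)⁻¹ * (1 - i) * (a + 1)) • E2 ∧
  Q.act P.x E2 = -E2 ∧ Q.act P.y E2 = E2 ∧
  Q.act P.z E2 = ((2:K)⁻¹ * (1 + i) * (a + 1)) • E1 ∧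
  Q.coact E1 = ((2:K)⁻¹ • ((P.x + P.y) * P.wEl i sqi)) ⊗ₜ[K] E1
      + (((2:K)⁻¹ * sqi) • ((P.x - P.y) * P.wEl i sqi)) ⊗ₜ[K] E2 ∧
  Q.coact E2 = ((2:K)⁻¹ • ((1 + P.x * P.y) * P.wEl i sqi)) ⊗ₜ[K] E2
      + (((2:K)⁻¹ * sqi) • ((1 - P.x * P.y) * P.wEl i sqi)) ⊗ₜ[K] E1

end Chars

end KPAlg

/-- `Q` is the direct sum of the Yetter–Drinfeld module data `Q₁` and `Q₂`,
with componentwise action and coaction. -/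
def IsProdYD {K H : Type*} [Field K] [Ring H] [HopfAlgebra K H]
    {M₁ M₂ : Type*} [AddCommGroup M₁] [Module K M₁] [AddCommGroup M₂] [Module K M₂]
    (Q₁ : PreYD K H M₁) (Q₂ : PreYD K H M₂) (Q : PreYD K H (M₁ × M₂)) : Prop :=
  (∀ (h : H) (m₁ : M₁) (m₂ : M₂), Q.act h (m₁, m₂) = (Q₁.act h m₁, Q₂.act h m₂)) ∧
  (∀ (m₁ : M₁) (m₂ : M₂), Q.coact (m₁, m₂) =
    (TensorProduct.map (LinearMap.id (R := K) (M := H)) (LinearMap.inl K M₁ M₂)) (Q₁.coact m₁) +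
    (TensorProduct.map LinearMap.id (LinearMap.inr K M₁ M₂)) (Q₂.coact m₂))

end

open TensorProduct CategoryTheory MonoidalCategory

noncomputable section

universe u

variable (K : Type u) [Field K] (V : Type u) [AddCommGroup V] [Module K V]

/-- The `n`-th tensor power of `V` (normalized with a tensor-unit factor on the left),
as an object of `ModuleCat K`. -/
def TP : ℕ → ModuleCat.{u} K
  | 0 => ModuleCat.of K K
  | n+1 => TP n ⊗ ModuleCat.of K V

variable {K V}

/-- The braiding `c` applied in tensor positions `(k, k+1)` of the `n`-th tensor power
(acting on the `k`-th and `(k+1)`-st copies of `V`); the identity when `k = 0` or `k ≥ n`. -/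
def ck (c : V ⊗[K] V →ₗ[K] V ⊗[K] V) : (n k : ℕ) → (TP K V n ⟶ TP K V n)
  | 0, _ => 𝟙 _
  | 1, _ => 𝟙 _
  | n+2, k =>
    if k = n+1 then
      (α_ (TP K V n) (ModuleCat.of K V) (ModuleCat.of K V)).hom ≫
        ((TP K V n) ◁ (ModuleCat.ofHom c)) ≫
        (α_ (TP K V n) (ModuleCat.of K V) (ModuleCat.of K V)).inv
    else (ck c (n+1) k) ▷ (ModuleCat.of K V)

/-- The partial quantum symmetrizer `S_{j,1} = id + c_j + c_j c_{j-1} + ⋯ + c_j ⋯ c_1`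
on the `n`-th tensor power (for `j = 0` it is the identity). -/
def Sfrag (c : V ⊗[K] V →ₗ[K] V ⊗[K] V) (n : ℕ) : ℕ → (TP K V n ⟶ TP K V n)
  | 0 => 𝟙 _
  | j+1 => 𝟙 _ + (Sfrag c n j ≫ ck c n (j+1))

/-- The quantum symmetrizer `S_n` on the `n`-th tensor power:
`S_1 = id`, `S_n = (S_{n-1} ⊗ id) ∘ S_{n-1,1}`. -/
def Sn (c : V ⊗[K] V →ₗ[K] V ⊗[K] V) : (n : ℕ) → (TP K V n ⟶ TP K V n)
  | 0 => 𝟙 _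
  | 1 => 𝟙 _
  | n+2 => Sfrag c (n+2) (n+1) ≫ ((Sn c (n+1)) ▷ (ModuleCat.of K V))

/-- The rank of the `n`-th graded component `V^{⊗n}/ker S_n` of the Nichols algebra. -/
def nicholsDegRank (c : V ⊗[K] V →ₗ[K] V ⊗[K] V) (n : ℕ) : Cardinal :=
  Module.rank K (↥(TP K V n) ⧸ LinearMap.ker (Sn c n).hom)

/-- The canonical embedding of the `n`-th tensor power into the tensor algebra. -/
def toTA : (n : ℕ) → (↥(TP K V n) →ₗ[K] TensorAlgebra K V)
  | 0 => Algebra.linearMap K (TensorAlgebra K V)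
  | n+1 => TensorProduct.lift
      (((LinearMap.mul K (TensorAlgebra K V)).comp (toTA n)).compl₂
        (TensorAlgebra.ι K (M := V)))

/-- The Nichols algebra of the braided vector space `(V, c)`: the quotient of the
tensor algebra `T(V)` by the (ideal generated by the) kernels of the quantum
symmetrizers. -/
def NicholsAlgebra (c : V ⊗[K] V →ₗ[K] V ⊗[K] V) : Type u :=
  RingQuot (fun a b : TensorAlgebra K V =>
    (∃ n, 2 ≤ n ∧ ∃ t ∈ LinearMap.ker (Sn c n).hom, toTA n t = a) ∧ b = 0)

instance (c : V ⊗[K] V →ₗ[K] V ⊗[K] V) : Ring (NicholsAlgebra c) := by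
  unfold NicholsAlgebra; infer_instance

instance (c : V ⊗[K] V →ₗ[K] V ⊗[K] V) : Algebra K (NicholsAlgebra c) := by
  unfold NicholsAlgebra; infer_instance
/-- The element `(w₁ ⊗ w₂)^{⊗n}` of the `2n`-th tensor power. -/
def welt (w1 w2 : V) : (n : ℕ) → ↥(TP K V (2*n))
  | 0 => (1 : K)
  | n+1 => (welt w1 w2 n ⊗ₜ[K] w1) ⊗ₜ[K] w2

end

/-!
The coaction of `M⟨b,g⟩` is `v ↦ g ⊗ v`, so the braiding is `v ⊗ w ↦ g·w ⊗ v = q (v ⊗ w)`,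
where `g` acts by `q = 1` when `g ∈ {1, xy}` (as `b = ±1`) and by `q = b² = -1` when
`g ∈ {x, y}`. For `c = q • id` every `c_k` is `q • id`, so the symmetrizer `S_n` is the
quantum factorial `[n]_q!` times the identity. For `q = 1` this is `n!`, invertible in
characteristic zero, so no relations are imposed and `B(M) = T(M) ≅ K[p]`. For `q = -1` it
vanishes as soon as `n ≥ 2`, so the defining ideal is the span of all words of length `≥ 2`,
i.e. `(p²)`.
-/

noncomputable section

open TensorProduct CategoryTheory MonoidalCategory Polynomial

universe u

namespace PreYD

variable {K H M : Type*} [Field K] [Ring H] [HopfAlgebra K H] [AddCommGroup M] [Module K M]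

theorem braiding_tmul_of_coact_eq {Q : PreYD K H M} {g : H}
    (hco : ∀ m, Q.coact m = g ⊗ₜ[K] m) (v w : M) :
    Q.braiding (v ⊗ₜ[K] w) = Q.act g w ⊗ₜ[K] v := by
  simp [braiding, hco]

theorem braiding_eq_smul_id_of_coact_eq {Q : PreYD K H K} {g : H} {c : K}
    (hg : ∀ w, Q.act g w = c * w) (hco : ∀ v, Q.coact v = g ⊗ₜ[K] v) :
    Q.braiding = c • LinearMap.id := by
  refine TensorProduct.ext' fun v w => (TensorProduct.lid K K).injective ?_
  simp only [braiding_tmul_of_coact_eq hco, hg, LinearMap.smul_apply, LinearMap.id_apply,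
    map_smul, TensorProduct.lid_tmul, smul_eq_mul]
  ring

end PreYD

section Symmetrizer

variable {K : Type u} [Field K] {V : Type u} [AddCommGroup V] [Module K V]

theorem ck_smul_id (c : K) {n k : ℕ} (hk : 1 ≤ k) (hkn : k + 1 ≤ n) :
    ck (c • LinearMap.id : V ⊗[K] V →ₗ[K] V ⊗[K] V) n k = c • 𝟙 (TP K V n) := by
  induction n with
  | zero => omega
  | succ m ih =>
    obtain _ | m := m
    · omega
    by_cases h : k = m + 1
    · erw [ck, if_pos h]
      change (α_ (TP K V m) _ _).hom ≫ (_ ◁ (c • 𝟙 (ModuleCat.of K V ⊗ ModuleCat.of K V))) ≫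
        (α_ (TP K V m) _ _).inv = c • 𝟙 ((TP K V m ⊗ ModuleCat.of K V) ⊗ ModuleCat.of K V)
      rw [MonoidalLinear.whiskerLeft_smul, whiskerLeft_id]
      simp only [Linear.smul_comp, Linear.comp_smul, Category.id_comp, Iso.hom_inv_id]
    · erw [ck, if_neg h, ih (by omega), MonoidalLinear.smul_whiskerRight, id_whiskerRight]
      rfl

theorem Sfrag_smul_id (c : K) {n j : ℕ} (hjn : j + 1 ≤ n) :
    Sfrag (c • LinearMap.id : V ⊗[K] V →ₗ[K] V ⊗[K] V) n j =
      (∑ i ∈ Finset.range (j + 1), c ^ i) • 𝟙 (TP K V n) := by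
  induction j with
  | zero => simp [Sfrag]
  | succ j ih =>
    rw [Sfrag, ih (by omega), ck_smul_id c (by omega) hjn, Linear.smul_comp, Linear.comp_smul,
      Category.comp_id, smul_smul]
    have hsum :
        ∑ i ∈ Finset.range (j + 2), c ^ i = 1 + (∑ i ∈ Finset.range (j + 1), c ^ i) * c := by
      rw [Finset.sum_range_succ', Finset.sum_mul]
      simp [pow_succ, add_comm]
    rw [hsum, add_smul, one_smul]

theorem Sn_smul_id (c : K) (n : ℕ) :
    Sn (c • LinearMap.id : V ⊗[K] V →ₗ[K] V ⊗[K] V) n =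
      (∏ m ∈ Finset.range n, ∑ i ∈ Finset.range (m + 1), c ^ i) • 𝟙 (TP K V n) := by
  induction n with
  | zero => simp [Sn]
  | succ m ih =>
    obtain _ | m := m
    · simp [Sn]
    rw [Sn, ih, Sfrag_smul_id c le_rfl, MonoidalLinear.smul_whiskerRight, id_whiskerRight]
    erw [Linear.smul_comp, Linear.comp_smul, Category.id_comp, smul_smul]
    rw [Finset.prod_range_succ _ (m + 1), mul_comm]
    rfl

theorem ker_Sn_one_smul_id [CharZero K] (n : ℕ) :
    LinearMap.ker (Sn ((1 : K) • LinearMap.id : V ⊗[K] V →ₗ[K] V ⊗[K] V) n).hom = ⊥ := by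
  have hfac : ∏ m ∈ Finset.range n, ∑ i ∈ Finset.range (m + 1), (1 : K) ^ i = n.factorial := by
    simp [← Finset.prod_range_add_one_eq_factorial]
  rw [Sn_smul_id, hfac, ModuleCat.hom_smul, ModuleCat.hom_id,
    LinearMap.ker_smul _ _ (Nat.cast_ne_zero.mpr n.factorial_ne_zero), LinearMap.ker_id]

theorem Sn_neg_one_smul_id {n : ℕ} (hn : 2 ≤ n) :
    Sn ((-1 : K) • LinearMap.id : V ⊗[K] V →ₗ[K] V ⊗[K] V) n = 0 := by
  rw [Sn_smul_id, Finset.prod_eq_zero (i := 1) (Finset.mem_range.2 hn) (by simp), zero_smul]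

end Symmetrizer

namespace RingQuot

variable {S A B : Type*} [CommSemiring S] [Semiring A] [Algebra S A]

def algEquivOfRelEq {r : A → A → Prop} (h : ∀ ⦃a b⦄, r a b → a = b) : RingQuot r ≃ₐ[S] A :=
  AlgEquiv.ofAlgHom (liftAlgHom S ⟨AlgHom.id S A, fun _ _ hab => h hab⟩) (mkAlgHom S r)
    (by ext; simp) (by ext; simp)

def algEquivQuotientOfRel [CommRing B] [Algebra S B] (r : B → B → Prop) :
    RingQuot r ≃ₐ[S] B ⧸ Ideal.ofRel r :=
  AlgEquiv.ofRingEquiv (f := ringQuotEquivIdealQuotient r) fun s => by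
    rw [← (mkAlgHom S r).commutes s, ← RingHom.coe_coe (mkAlgHom S r), mkAlgHom_coe]
    exact ringQuotToIdealQuotient_apply r _

end RingQuot

section NicholsAlgebra

variable {K : Type u} [Field K] {V : Type u} [AddCommGroup V] [Module K V]

abbrev nicholsRel (c : V ⊗[K] V →ₗ[K] V ⊗[K] V) : TensorAlgebra K V → TensorAlgebra K V → Prop :=
  fun a b => (∃ n, 2 ≤ n ∧ ∃ t ∈ LinearMap.ker (Sn c n).hom, toTA n t = a) ∧ b = 0

def nicholsAlgebraOneSmulIdEquiv [CharZero K] :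
    NicholsAlgebra ((1 : K) • LinearMap.id : V ⊗[K] V →ₗ[K] V ⊗[K] V) ≃ₐ[K] TensorAlgebra K V :=
  RingQuot.algEquivOfRelEq (r := nicholsRel _) fun _ _ ⟨⟨n, _, t, ht, hta⟩, hb⟩ => by
    rw [ker_Sn_one_smul_id, Submodule.mem_bot] at ht
    rw [← hta, ht, map_zero, hb]

end NicholsAlgebra

section OneDimensional

variable {K : Type u} [Field K]

def tensorAlgebraSelfEquivPolynomial : TensorAlgebra K K ≃ₐ[K] K[X] :=
  AlgEquiv.ofAlgHom (TensorAlgebra.lift K (LinearMap.toSpanSingleton K K[X] X))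
    (aeval (TensorAlgebra.ι K 1)) (by ext; simp) (by ext; simp)

theorem tensorAlgebraSelfEquivPolynomial_ι (v : K) :
    tensorAlgebraSelfEquivPolynomial (TensorAlgebra.ι K v) = C v * X := by
  simp [tensorAlgebraSelfEquivPolynomial, smul_eq_C_mul]

theorem X_pow_dvd_tensorAlgebraSelfEquivPolynomial_toTA (n : ℕ) (t : TP K K n) :
    (X : K[X]) ^ n ∣ tensorAlgebraSelfEquivPolynomial (toTA n t) := by
  induction n with
  | zero => simp
  | succ n ih =>
    induction t using TensorProduct.induction_on with
    | zero =>
      erw [map_zero]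
      exact dvd_zero _
    | tmul s v =>
      change X ^ (n + 1) ∣ tensorAlgebraSelfEquivPolynomial (toTA n s * TensorAlgebra.ι K v)
      rw [map_mul, tensorAlgebraSelfEquivPolynomial_ι, pow_succ]
      exact mul_dvd_mul (ih s) (dvd_mul_left _ _)
    | add s t hs ht =>
      erw [map_add, map_add]
      exact dvd_add hs ht

theorem tensorAlgebraSelfEquivPolynomial_toTA_two :
    tensorAlgebraSelfEquivPolynomial
      (toTA 2 ((((1 : K) ⊗ₜ[K] (1 : K)) ⊗ₜ[K] (1 : K)) : TP K K 2)) = X ^ 2 := by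
  change tensorAlgebraSelfEquivPolynomial
    (algebraMap K _ 1 * TensorAlgebra.ι K 1 * TensorAlgebra.ι K 1) = _
  simp [tensorAlgebraSelfEquivPolynomial_ι, sq]

theorem ofRel_nicholsRel_neg_one_smul_id :
    Ideal.ofRel (Function.onFun (nicholsRel ((-1 : K) • LinearMap.id : K ⊗[K] K →ₗ[K] K ⊗[K] K))
      (tensorAlgebraSelfEquivPolynomial (K := K)).symm) = Ideal.span {X ^ 2} := by
  apply le_antisymm
  · refine Ideal.span_le.2 ?_
    rintro p ⟨a, b, ⟨⟨n, hn, t, -, hta⟩, hb⟩, rfl⟩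
    rw [map_eq_zero_iff _ tensorAlgebraSelfEquivPolynomial.symm.injective] at hb
    rw [hb, add_zero] at hta
    rw [← tensorAlgebraSelfEquivPolynomial.apply_symm_apply p, ← hta, SetLike.mem_coe,
      Ideal.mem_span_singleton]
    exact (pow_dvd_pow X hn).trans (X_pow_dvd_tensorAlgebraSelfEquivPolynomial_toTA n t)
  · refine Ideal.span_le.2 <| Set.singleton_subset_iff.2 <|
      Ideal.subset_span ⟨X ^ 2, 0, ?_, add_zero _⟩
    refine ⟨⟨2, le_rfl, (((1 : K) ⊗ₜ[K] (1 : K)) ⊗ₜ[K] (1 : K) : TP K K 2), ?_,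
      by rw [← tensorAlgebraSelfEquivPolynomial_toTA_two, AlgEquiv.symm_apply_apply]⟩, map_zero _⟩
    rw [Sn_neg_one_smul_id le_rfl]
    exact LinearMap.mem_ker.2 rfl

def nicholsAlgebraNegOneSmulIdEquiv :
    NicholsAlgebra ((-1 : K) • LinearMap.id : K ⊗[K] K →ₗ[K] K ⊗[K] K) ≃ₐ[K]
      K[X] ⧸ Ideal.span {(X : K[X]) ^ 2} :=
  (RingQuot.algEquivQuotAlgEquiv tensorAlgebraSelfEquivPolynomial (nicholsRel _)).trans <|
    (RingQuot.algEquivQuotientOfRel _).trans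
      (Ideal.quotientEquivAlgOfEq K ofRel_nicholsRel_neg_one_smul_id)

end OneDimensional

theorem rank_quotient_span_eq_natDegree {K : Type*} [Field K] {f : K[X]} (hf : f ≠ 0) :
    Module.rank K (K[X] ⧸ Ideal.span {f}) = f.natDegree := by
  have : Module.Finite K (K[X] ⧸ Ideal.span {f}) := .of_basis (AdjoinRoot.powerBasis hf).basis
  rw [← Module.finrank_eq_rank, finrank_quotient_span_eq_natDegree]

end

noncomputable section

open TensorProduct

theorem nichols_algebra_of_one_dimensional_yd_modules_over_H8_general
    {K H : Type*} [Field K] [CharZero K]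
    [Ring H] [HopfAlgebra K H] (P : KPAlg K H) (i : K) (hi : i ^ 2 = -1) :
    (∀ p ∈ ({((1:K), (1:H)), (-1, 1), (1, P.x * P.y), (-1, P.x * P.y)} : Set (K × H)),
      ∀ Q : PreYD K H K, Q.IsYD → P.IsM1 p.1 p.2 Q →
        Nonempty (NicholsAlgebra Q.braiding ≃ₐ[K] Polynomial K) ∧
        ¬ Module.Finite K (NicholsAlgebra Q.braiding)) ∧
    (∀ p ∈ ({(i, P.x), (-i, P.x), (i, P.y), (-i, P.y)} : Set (K × H)),
      ∀ Q : PreYD K H K, Q.IsYD → P.IsM1 p.1 p.2 Q →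
        Nonempty (NicholsAlgebra Q.braiding ≃ₐ[K]
          (Polynomial K ⧸ Ideal.span {(Polynomial.X : Polynomial K) ^ 2})) ∧
        Module.rank K (NicholsAlgebra Q.braiding) = 2) := by
  refine ⟨fun p hp Q hQ hM => ?_, fun p hp Q _ hM => ?_⟩
  · obtain ⟨hone, hmul, -⟩ := hQ
    have hg : ∀ w, Q.act p.2 w = 1 * w := by
      rcases hp with rfl | rfl | rfl | rfl <;> intro w <;> simp [hone, hmul, hM.1, hM.2.1]
    rw [PreYD.braiding_eq_smul_id_of_coact_eq hg hM.2.2.2]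
    let e := (nicholsAlgebraOneSmulIdEquiv (V := K)).trans tensorAlgebraSelfEquivPolynomial
    exact ⟨⟨e⟩, fun _ => Polynomial.not_finite (Module.Finite.equiv e.toLinearEquiv)⟩
  · have hg : ∀ w, Q.act p.2 w = -1 * w := by
      rcases hp with rfl | rfl | rfl | rfl <;> intro w <;> simp [hM.1, hM.2.1, hi]
    rw [PreYD.braiding_eq_smul_id_of_coact_eq hg hM.2.2.2]
    refine ⟨⟨nicholsAlgebraNegOneSmulIdEquiv⟩, ?_⟩
    rw [nicholsAlgebraNegOneSmulIdEquiv.toLinearEquiv.rank_eq,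
      rank_quotient_span_eq_natDegree (pow_ne_zero 2 Polynomial.X_ne_zero),
      Polynomial.natDegree_X_pow]
    rfl

/-- For `(b,g) ∈ {(1,1),(-1,1),(1,xy),(-1,xy)}` the Nichols algebra
`B(M⟨b,g⟩)` is isomorphic to the polynomial algebra `K[p]`, in particular
infinite-dimensional; for `(b,g) ∈ {(i,x),(-i,x),(i,y),(-i,y)}` it is isomorphic
to `K[p]/(p²)`, in particular of dimension `2`. -/
theorem nichols_algebra_of_one_dimensional_yd_modules_over_H8
    {K H : Type*} [Field K] [CharZero K] [IsAlgClosed K]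
    [Ring H] [HopfAlgebra K H] (P : KPAlg K H) (i : K) (hi : i ^ 2 = -1) :
    (∀ p ∈ ({((1:K), (1:H)), (-1, 1), (1, P.x * P.y), (-1, P.x * P.y)} : Set (K × H)),
      ∀ Q : PreYD K H K, Q.IsYD → P.IsM1 p.1 p.2 Q →
        Nonempty (NicholsAlgebra Q.braiding ≃ₐ[K] Polynomial K) ∧
        ¬ Module.Finite K (NicholsAlgebra Q.braiding)) ∧
    (∀ p ∈ ({(i, P.x), (-i, P.x), (i, P.y), (-i, P.y)} : Set (K × H)),
      ∀ Q : PreYD K H K, Q.IsYD → P.IsM1 p.1 p.2 Q →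
        Nonempty (NicholsAlgebra Q.braiding ≃ₐ[K]
          (Polynomial K ⧸ Ideal.span {(Polynomial.X : Polynomial K) ^ 2})) ∧
        Module.rank K (NicholsAlgebra Q.braiding) = 2) :=
  nichols_algebra_of_one_dimensional_yd_modules_over_H8_general P i hi

end
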